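/- arXiv:math/0612377 — 2 statements merged into one kernel-verified Lean document; each statement's English description precedes it below -/
import Mathlib

section
/- Let I be a maximum independent set of K_r^n (r ≥ 3), i.e. the set of vertices with a fixed value in a fixed coordinate, and let J be an independent set of K_r^n with J ⊄ I. Then |I \ J| ≥ (r-1)^{n-1}. -/
/-!
Pick `y ∈ J \ I`, so `y j ≠ i`. Every `x` with `x j = i` and `x k ≠ y k` for all `k ≠ j` differs
from `y` in every coordinate, hence is adjacent to `y` and cannot lie in the independent set `J`.
These `x` lie in `I`, and there are `(r - 1) ^ (n - 1)` of them.
-/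

/-- The weak product `K_r^n`: vertices are `Fin n → ZMod r`, two vertices are
adjacent iff they differ in every coordinate. -/
def weakProductGraph (r n : ℕ) : SimpleGraph (Fin n → ZMod r) :=
  SimpleGraph.fromRel (fun x y => ∀ k, x k ≠ y k)

/-- A finset of vertices is independent: no two of its elements are adjacent. -/
def IsIndepFinset {V : Type*} (G : SimpleGraph V) (J : Finset V) : Prop :=
  ∀ x ∈ J, ∀ y ∈ J, ¬ G.Adj x y

open Finset Fintype

theorem card_piFinset_update_compl_singleton {ι α : Type*} [Fintype ι] [DecidableEq ι]
    [Fintype α] [DecidableEq α] (y : ι → α) (j : ι) (a : α) :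
    #(piFinset (Function.update (fun k => ({y k}ᶜ : Finset α)) j {a})) =
      (card α - 1) ^ (card ι - 1) := by
  rw [card_piFinset, Fintype.prod_eq_mul_prod_compl j, Function.update_self, card_singleton,
    one_mul, Finset.prod_congr rfl fun k hk => by rw [Function.update_of_ne (by simpa using hk)]]
  simp [card_compl]

theorem forall_ne_of_mem_piFinset_update {ι α : Type*} [Fintype ι] [DecidableEq ι]
    [Fintype α] [DecidableEq α] {y x : ι → α} {j : ι} {a : α} (ha : a ≠ y j)
    (hx : x ∈ piFinset (Function.update (fun k => ({y k}ᶜ : Finset α)) j {a})) :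
    ∀ k, x k ≠ y k := by
  intro k
  have hxk := mem_piFinset.mp hx k
  by_cases hk : k = j
  · subst hk
    simp only [Function.update_self, mem_singleton] at hxk
    rwa [hxk]
  · simpa [hk] using hxk

theorem weakProductGraph_adj_of_forall_ne {r n : ℕ} {x y : Fin n → ZMod r} (j : Fin n)
    (h : ∀ k, x k ≠ y k) : (weakProductGraph r n).Adj x y :=
  ⟨fun hxy => h j (congrFun hxy j), Or.inl h⟩

theorem stmt3_general (r n : ℕ) [NeZero r]
    (j : Fin n) (i : ZMod r)
    (I : Finset (Fin n → ZMod r))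
    (hI : I = Finset.univ.filter (fun x => x j = i))
    (J : Finset (Fin n → ZMod r))
    (hJ : IsIndepFinset (weakProductGraph r n) J)
    (hJI : ¬ J ⊆ I) :
    (r - 1) ^ (n - 1) ≤ (I \ J).card := by
  obtain ⟨y, hyJ, hyI⟩ := not_subset.mp hJI
  have hiy : i ≠ y j := fun h => hyI (by simp [hI, h])
  set T := piFinset (Function.update (fun k => ({y k}ᶜ : Finset (ZMod r))) j {i})
  have hTsub : T ⊆ I \ J := by
    intro x hx
    have hxj : x j = i := by simpa using mem_piFinset.mp hx j
    have hadj := weakProductGraph_adj_of_forall_ne j (forall_ne_of_mem_piFinset_update hiy hx)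
    exact mem_sdiff.mpr ⟨by simp [hI, hxj], fun hxJ => hJ x hxJ y hyJ hadj⟩
  calc (r - 1) ^ (n - 1) = #T := by
        rw [card_piFinset_update_compl_singleton, ZMod.card, Fintype.card_fin]
    _ ≤ #(I \ J) := card_le_card hTsub

theorem stmt3 (r n : ℕ) [NeZero r] (hr : 3 ≤ r) (hn : 1 ≤ n)
    (j : Fin n) (i : ZMod r)
    (I : Finset (Fin n → ZMod r))
    (hI : I = Finset.univ.filter (fun x => x j = i))
    (J : Finset (Fin n → ZMod r))
    (hJ : IsIndepFinset (weakProductGraph r n) J)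
    (hJI : ¬ J ⊆ I) :
    (r - 1) ^ (n - 1) ≤ (I \ J).card :=
  stmt3_general r n j i I hI J hJ hJI
end

section
/- Bennett's inequality: Let X_1, ..., X_n be independent real-valued random variables with E[X_i] = 0 and X_i ≤ c almost surely, for some c > 0. Let σ² = Σ Var[X_i]. Then for any t > 0, P[Σ X_i ≥ t] ≤ exp(−(σ²/c²)·h(tc/σ²)), where h(u) = (1+u)ln(1+u) − u. -/
/-!
Chernoff's method. As `(exp w - w - 1) / w ^ 2` is nondecreasing, `X ≤ c` and `l > 0` give
`exp (l X) ≤ 1 + l X + (exp (l c) - l c - 1) / c ^ 2 * X ^ 2`; taking expectations with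
`E X = 0` bounds the moment generating function of `X` at `l` by
`exp ((exp (l c) - l c - 1) / c ^ 2 * Var X)`. Independence multiplies these bounds, Markov's
inequality for `exp (l ∑ X i)` turns them into a tail bound for every `l > 0`, and
`l = log (1 + t c / σ²) / c` minimizes its exponent to Bennett's.
-/

open MeasureTheory ProbabilityTheory

namespace Real

lemma exp_le_one_add_add_sq_div_two_of_nonpos {u : ℝ} (hu : u ≤ 0) :
    exp u ≤ 1 + u + u ^ 2 / 2 := by
  have hanti : AntitoneOn (fun w => 1 + w + w ^ 2 / 2 - exp w) (Set.Iic 0) := by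
    refine antitoneOn_of_hasDerivWithinAt_nonpos (f' := fun w => 1 + w - exp w)
      (convex_Iic 0) (by fun_prop) (fun w _ => ?_) (fun w _ => by linarith [add_one_le_exp w])
    refine HasDerivAt.hasDerivWithinAt ?_
    refine ((((hasDerivAt_id w).const_add 1).add ((hasDerivAt_pow 2 w).div_const 2)).sub
      (hasDerivAt_exp w)).congr_deriv ?_
    simp
  have := hanti hu Set.self_mem_Iic hu
  simp only [exp_zero] at this
  linarith

lemma sub_two_mul_exp_add_add_two_nonneg {w : ℝ} (hw : 0 ≤ w) :
    0 ≤ (w - 2) * exp w + w + 2 := by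
  have hmono : MonotoneOn (fun w => (w - 2) * exp w + w + 2) (Set.Ici 0) := by
    refine monotoneOn_of_hasDerivWithinAt_nonneg (f' := fun w => (w - 1) * exp w + 1)
      (convex_Ici 0) (by fun_prop) (fun w _ => ?_) (fun w _ => ?_)
    · refine HasDerivAt.hasDerivWithinAt ?_
      refine ((((hasDerivAt_id w).sub_const 2).mul (hasDerivAt_exp w)).add
        (hasDerivAt_id w)).add_const 2 |>.congr_deriv ?_
      simp only [one_mul, id_eq, add_left_inj]; ring
    · have h := mul_le_mul_of_nonneg_right (add_one_le_exp (-w)) (exp_pos w).le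
      rw [← exp_add, neg_add_cancel, exp_zero] at h
      linarith
  simpa using hmono Set.self_mem_Ici hw hw

lemma monotoneOn_exp_sub_sub_one_div_sq :
    MonotoneOn (fun w => (exp w - w - 1) / w ^ 2) (Set.Ioi 0) := by
  refine monotoneOn_of_hasDerivWithinAt_nonneg
    (f' := fun w => ((w - 2) * exp w + w + 2) / w ^ 3) (convex_Ioi 0) ?_ (fun w hw => ?_)
    (fun w hw => ?_)
  · exact ContinuousOn.div (by fun_prop) (by fun_prop) fun w hw => pow_ne_zero 2 (ne_of_gt hw)
  · rw [interior_Ioi] at hw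
    have hw0 : w ≠ 0 := ne_of_gt hw
    refine HasDerivAt.hasDerivWithinAt ?_
    refine ((((hasDerivAt_exp w).sub (hasDerivAt_id w)).sub_const 1).div (hasDerivAt_pow 2 w)
      (pow_ne_zero 2 hw0)).congr_deriv ?_
    simp only [Pi.sub_apply, id_eq, Nat.cast_ofNat, Nat.add_one_sub_one, pow_one]
    field_simp
    ring
  · rw [interior_Ioi] at hw
    exact div_nonneg (sub_two_mul_exp_add_add_two_nonneg hw.le) (pow_nonneg hw.le 3)

lemma exp_le_one_add_add_mul_sq_of_le {u v : ℝ} (huv : u ≤ v) (hv : 0 < v) :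
    exp u ≤ 1 + u + (exp v - v - 1) / v ^ 2 * u ^ 2 := by
  rcases le_or_gt u 0 with hu | hu
  · have hhalf : 1 / 2 ≤ (exp v - v - 1) / v ^ 2 := by
      rw [le_div_iff₀ (by positivity)]
      linarith [quadratic_le_exp_of_nonneg hv.le]
    nlinarith [exp_le_one_add_add_sq_div_two_of_nonpos hu, sq_nonneg u]
  · have hmono := mul_le_mul_of_nonneg_right
      (monotoneOn_exp_sub_sub_one_div_sq hu (hu.trans_le huv) huv) (sq_nonneg u)
    have hsplit : exp u = 1 + u + (exp u - u - 1) / u ^ 2 * u ^ 2 := by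
      field_simp; ring
    linarith
end Real

open Real

namespace ProbabilityTheory

variable {Ω : Type*} [MeasurableSpace Ω] {μ : Measure Ω}

lemma integrable_exp_mul_of_ae_le [IsFiniteMeasure μ] {X : Ω → ℝ}
    (hX : AEStronglyMeasurable X μ) {c l : ℝ} (hl : 0 ≤ l) (hbdd : ∀ᵐ ω ∂μ, X ω ≤ c) :
    Integrable (fun ω => exp (l * X ω)) μ := by
  refine .of_bound (continuous_exp.comp_aestronglyMeasurable (hX.const_mul l)) (exp (l * c)) ?_
  filter_upwards [hbdd] with ω hω
  rw [norm_of_nonneg (exp_pos _).le, exp_le_exp]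
  exact mul_le_mul_of_nonneg_left hω hl

lemma mgf_le_exp_mul_variance_of_ae_le [IsProbabilityMeasure μ] {X : Ω → ℝ} (hX : MemLp X 2 μ)
    (hmean : μ[X] = 0) {c l : ℝ} (hc : 0 < c) (hl : 0 < l) (hbdd : ∀ᵐ ω ∂μ, X ω ≤ c) :
    mgf X μ l ≤ exp ((exp (l * c) - l * c - 1) / c ^ 2 * variance X μ) := by
  set κ := (exp (l * c) - l * c - 1) / c ^ 2
  have hpoint : (fun ω => exp (l * X ω)) ≤ᵐ[μ] fun ω => 1 + l * X ω + κ * X ω ^ 2 := by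
    filter_upwards [hbdd] with ω hω
    have h := exp_le_one_add_add_mul_sq_of_le (mul_le_mul_of_nonneg_left hω hl.le)
      (mul_pos hl hc)
    convert h using 2
    simp only [κ]; field_simp
  have hlin : Integrable (fun ω => 1 + l * X ω) μ :=
    (integrable_const 1).add ((hX.integrable one_le_two).const_mul l)
  have hsq : Integrable (fun ω => κ * X ω ^ 2) μ := hX.integrable_sq.const_mul κ
  have hdom : Integrable (fun ω => 1 + l * X ω + κ * X ω ^ 2) μ := hlin.add hsq
  calc mgf X μ l ≤ ∫ ω, 1 + l * X ω + κ * X ω ^ 2 ∂μ :=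
        integral_mono_ae (integrable_exp_mul_of_ae_le hX.1 hl.le hbdd) hdom hpoint
    _ = 1 + κ * variance X μ := by
        rw [integral_add hlin hsq, integral_add (integrable_const 1)
          ((hX.integrable one_le_two).const_mul l), integral_const_mul, integral_const_mul,
          hmean, variance_of_integral_eq_zero hX.1.aemeasurable hmean]
        simp
    _ ≤ exp (κ * variance X μ) := by linarith [add_one_le_exp (κ * variance X μ)]

lemma measureReal_sum_ge_le_of_ae_le {ι : Type*} {X : ι → Ω → ℝ} (s : Finset ι)
    (hmeas : ∀ i, Measurable (X i)) (hindep : iIndepFun X μ) (hL2 : ∀ i, MemLp (X i) 2 μ)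
    (hmean : ∀ i, μ[X i] = 0) {c l : ℝ} (hc : 0 < c) (hl : 0 < l)
    (hbdd : ∀ i, ∀ᵐ ω ∂μ, X i ω ≤ c) (t : ℝ) :
    μ.real {ω | t ≤ ∑ i ∈ s, X i ω} ≤
      exp (-l * t + (exp (l * c) - l * c - 1) / c ^ 2 * ∑ i ∈ s, variance (X i) μ) := by
  have := hindep.isProbabilityMeasure
  have hint : Integrable (fun ω => exp (l * (∑ i ∈ s, X i) ω)) μ :=
    hindep.integrable_exp_mul_sum hmeas fun i _ =>
      integrable_exp_mul_of_ae_le (hL2 i).1 hl.le (hbdd i)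
  have hmgf : mgf (∑ i ∈ s, X i) μ l ≤
      exp ((exp (l * c) - l * c - 1) / c ^ 2 * ∑ i ∈ s, variance (X i) μ) := by
    rw [hindep.mgf_sum hmeas, Finset.mul_sum, exp_sum]
    exact Finset.prod_le_prod (fun i _ => mgf_nonneg) fun i _ =>
      mgf_le_exp_mul_variance_of_ae_le (hL2 i) (hmean i) hc hl (hbdd i)
  calc μ.real {ω | t ≤ ∑ i ∈ s, X i ω} ≤ exp (-l * t) * mgf (∑ i ∈ s, X i) μ l := by
        simpa only [Finset.sum_apply] using measure_ge_le_exp_mul_mgf t hl.le hint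
    _ ≤ _ := by
        rw [exp_add]
        exact mul_le_mul_of_nonneg_left hmgf (exp_pos _).le

end ProbabilityTheory

theorem stmt6 {Ω : Type*} [MeasurableSpace Ω] (μ : Measure Ω) [IsProbabilityMeasure μ]
    {n : ℕ} (X : Fin n → Ω → ℝ) (hmeas : ∀ i, Measurable (X i))
    (hindep : iIndepFun X μ)
    (hL2 : ∀ i, MemLp (X i) 2 μ)
    (hmean : ∀ i, μ[X i] = 0)
    (c : ℝ) (hc : 0 < c) (hbdd : ∀ i, ∀ᵐ ω ∂μ, X i ω ≤ c)
    (σ2 : ℝ) (hσ2 : σ2 = ∑ i, variance (X i) μ)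
    (t : ℝ) (ht : 0 < t) :
    (μ {ω | t ≤ ∑ i, X i ω}).toReal ≤
      Real.exp (-(σ2 / c ^ 2) *
        ((1 + t * c / σ2) * Real.log (1 + t * c / σ2) - t * c / σ2)) := by
  rw [← measureReal_def]
  have hσ2_nonneg : 0 ≤ σ2 := hσ2 ▸ Finset.sum_nonneg fun i _ => variance_nonneg _ _
  rcases hσ2_nonneg.eq_or_lt with rfl | hσ2_pos
  · -- the junk value `x / 0 = 0` makes the exponent vanish
    simp [measureReal_le_one]
  set u := t * c / σ2
  have hl : 0 < log (1 + u) / c := div_pos (log_pos (by linarith [show 0 < u by positivity])) hc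
  calc μ.real {ω | t ≤ ∑ i, X i ω} ≤ _ :=
        hσ2 ▸ measureReal_sum_ge_le_of_ae_le Finset.univ hmeas hindep hL2 hmean hc hl hbdd t
    _ = _ := by
        rw [div_mul_cancel₀ _ hc.ne', exp_log (by positivity)]
        congr 1
        simp only [u]
        field_simp
        ring
end
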